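/- For all n ≥ 0 and all real x, y, z, ρ₁, ρ₂, q: P_n(x | y, ρ₁ρ₂, q) = ∑_{i=0}^n [n choose i]_q ρ₁^{n-i} P_i(x | z, ρ₁, q) P_{n-i}(z | y, ρ₂, q), a composition/connection formula for Al-Salam–Chihara polynomials. -/

import Mathlib

noncomputable def qint (q : ℝ) (n : ℕ) : ℝ := ∑ i ∈ Finset.range n, q ^ i

noncomputable def qfact (q : ℝ) (n : ℕ) : ℝ := ∏ i ∈ Finset.range n, qint q (i + 1)

noncomputable def qPoch (a q : ℝ) (n : ℕ) : ℝ := ∏ i ∈ Finset.range n, (1 - a * q ^ i)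

/-- Gaussian binomial coefficient as a polynomial in `q`, via the Pascal-type recurrence. -/
noncomputable def qbinom (q : ℝ) : ℕ → ℕ → ℝ
  | _, 0 => 1
  | 0, _ + 1 => 0
  | n + 1, k + 1 => qbinom q n k + q ^ (k + 1) * qbinom q n (k + 1)

/-- Rescaled continuous q-Hermite polynomials `H_n(x|q)`. -/
noncomputable def qHermite (q x : ℝ) : ℕ → ℝ
  | 0 => 1
  | 1 => x
  | n + 2 => x * qHermite q x (n + 1) - qint q (n + 1) * qHermite q x n

/-- Chebyshev polynomials of the second kind. -/
noncomputable def Ucheb (x : ℝ) : ℕ → ℝ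
  | 0 => 1
  | 1 => 2 * x
  | n + 2 => 2 * x * Ucheb x (n + 1) - Ucheb x n

/-- Probabilist's Hermite polynomials. -/
noncomputable def He (x : ℝ) : ℕ → ℝ
  | 0 => 1
  | 1 => x
  | n + 2 => x * He x (n + 1) - (n + 1 : ℝ) * He x n

/-- Big q-Hermite polynomials `H_n(x|a,q)`. -/
noncomputable def bigH (q a x : ℝ) (n : ℕ) : ℝ :=
  ∑ i ∈ Finset.range (n + 1),
    qbinom q n i * q ^ (i.choose 2) * (-a) ^ i * qHermite q x (n - i)

/-- Al-Salam--Chihara polynomials `P_n(x|y,ρ,q)`. -/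
noncomputable def ASC (q x y ρ : ℝ) : ℕ → ℝ
  | 0 => 1
  | 1 => x - ρ * y
  | n + 2 =>
      (x - ρ * y * q ^ (n + 1)) * ASC q x y ρ (n + 1)
        - qint q (n + 1) * (1 - ρ ^ 2 * q ^ n) * ASC q x y ρ n

/-- Auxiliary polynomials `B_n(x|q)`. -/
noncomputable def Bpoly (q x : ℝ) : ℕ → ℝ
  | 0 => 1
  | 1 => -x
  | n + 2 => -q ^ (n + 1) * x * Bpoly q x (n + 1) + q ^ n * qint q (n + 1) * Bpoly q x n


/-!
Both sides satisfy the three-term recurrence defining `P_n(x | y, ρ₁ρ₂, q)`. Write the right-hand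
side as a sum over `i + j = n`, split `[n+2 choose i]_q` by the q-Pascal rule, and expand
`P_{i+1}(x | z, ρ₁)` and `P_{j+1}(z | y, ρ₂)` by their recurrences: the terms in `z` cancel,
leaving `(x - ρ₁ρ₂ y q^{n+1})` times the sum of order `n + 1`, and the two lowering terms are
brought back to order `n` by `[n+1 choose i+1][i+1] = [n+1][n choose i]` and
`[n+1 choose i][n+1-i] = [n+1][n choose i]`, where they combine into `[n+1](1 - ρ₁²ρ₂² qⁿ)`.
-/

open Finset

lemma qint_zero (q : ℝ) : qint q 0 = 0 := by simp [qint]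

lemma qint_succ (q : ℝ) (n : ℕ) : qint q (n + 1) = 1 + q * qint q n := by
  simp only [qint, sum_range_succ', mul_sum, pow_succ', pow_zero, add_comm]

lemma qint_succ' (q : ℝ) (n : ℕ) : qint q (n + 1) = qint q n + q ^ n := by
  simp [qint, sum_range_succ]

@[simp]
lemma qbinom_zero_right (q : ℝ) (n : ℕ) : qbinom q n 0 = 1 := by
  cases n <;> rfl

lemma qbinom_succ_succ (q : ℝ) (n k : ℕ) :
    qbinom q (n + 1) (k + 1) = qbinom q n k + q ^ (k + 1) * qbinom q n (k + 1) := rfl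

lemma qbinom_of_lt (q : ℝ) {n k : ℕ} (h : n < k) : qbinom q n k = 0 := by
  induction n generalizing k with
  | zero => obtain ⟨k, rfl⟩ := Nat.exists_eq_succ_of_ne_zero (by omega : k ≠ 0); rfl
  | succ m ih =>
    obtain ⟨k, rfl⟩ := Nat.exists_eq_succ_of_ne_zero (by omega : k ≠ 0)
    rw [qbinom_succ_succ, ih (by omega), ih (by omega), mul_zero, add_zero]

lemma qbinom_succ_succ_mul_qint (q : ℝ) (n i : ℕ) :
    qbinom q (n + 1) (i + 1) * qint q (i + 1) = qint q (n + 1) * qbinom q n i := by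
  induction n generalizing i with
  | zero =>
    cases i with
    | zero => simp [qbinom, qint]
    | succ j => simp [qbinom_succ_succ, qbinom_of_lt]
  | succ m ih =>
    cases i with
    | zero =>
      have h := ih 0
      simp only [qbinom_zero_right, zero_add, qint_succ q 0, qint_zero] at h ⊢
      rw [qbinom_succ_succ, qbinom_zero_right, qint_succ q (m + 1)]
      linear_combination q * h
    | succ j =>
      rw [qbinom_succ_succ q (m + 1) (j + 1), qint_succ q (j + 1), qint_succ q (m + 1)]
      linear_combination q * ih j + q ^ (j + 2) * ih (j + 1)
        - q * qint q (m + 1) * qbinom_succ_succ q m j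
        - q ^ (j + 2) * qbinom q (m + 1) (j + 2) * qint_succ q (j + 1)

lemma qbinom_succ_mul_qint_sub (q : ℝ) (n i : ℕ) :
    qbinom q (n + 1) i * qint q (n + 1 - i) = qint q (n + 1) * qbinom q n i := by
  induction n generalizing i with
  | zero =>
    match i with
    | 0 => simp
    | 1 => simp [qbinom_of_lt, qint_zero]
    | j + 2 => simp [qbinom_of_lt]
  | succ m ih =>
    cases i with
    | zero => simp
    | succ k =>
      rcases Nat.lt_or_ge m k with hmk | hkm
      · rw [qbinom_of_lt q (by omega : m + 1 < k + 1), show m + 1 + 1 - (k + 1) = 0 by omega,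
          qint_zero, mul_zero, mul_zero]
      · have h₁ := ih k
        have h₂ := ih (k + 1)
        rw [show m + 1 - k = m - k + 1 by omega, qint_succ'] at h₁
        rw [show m + 1 - (k + 1) = m - k by omega] at h₂
        have hpow : q ^ (k + 1) * q ^ (m - k) = q ^ (m + 1) := by
          rw [← pow_add]; congr 1; omega
        rw [show m + 1 + 1 - (k + 1) = m - k + 1 by omega, qbinom_succ_succ q (m + 1) k,
          qint_succ' q (m + 1), qint_succ' q (m - k)]
        linear_combination h₁ + q ^ (k + 1) * h₂ + qbinom q (m + 1) (k + 1) * hpow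
          - qint q (m + 1) * qbinom_succ_succ q m k

lemma ASC_succ (q x y ρ : ℝ) (n : ℕ) :
    ASC q x y ρ (n + 1) =
      (x - ρ * y * q ^ n) * ASC q x y ρ n
        - qint q n * (1 - ρ ^ 2 * q ^ (n - 1)) * ASC q x y ρ (n - 1) := by
  cases n with
  | zero => simp [ASC, qint_zero]
  | succ n => rfl

lemma eq_ASC_of_recurrence {q x y ρ : ℝ} {u : ℕ → ℝ} (h₀ : u 0 = 1) (h₁ : u 1 = x - ρ * y)
    (hrec : ∀ n, u (n + 2) = (x - ρ * y * q ^ (n + 1)) * u (n + 1)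
      - qint q (n + 1) * (1 - ρ ^ 2 * q ^ n) * u n) (n : ℕ) :
    u n = ASC q x y ρ n := by
  induction n using Nat.twoStepInduction with
  | zero => exact h₀
  | one => exact h₁
  | more n ih₀ ih₁ => rw [hrec, ih₀, ih₁, ASC]

lemma sum_antidiagonal_succ_qbinom_mul (q : ℝ) (n : ℕ) (f : ℕ → ℕ → ℝ) :
    ∑ p ∈ antidiagonal (n + 1), qbinom q (n + 1) p.1 * f p.1 p.2
      = ∑ p ∈ antidiagonal n,
          qbinom q n p.1 * (f (p.1 + 1) p.2 + q ^ p.1 * f p.1 (p.2 + 1)) := by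
  have shifted : ∑ p ∈ antidiagonal n, qbinom q n p.1 * (q ^ p.1 * f p.1 (p.2 + 1))
      = f 0 (n + 1)
        + ∑ p ∈ antidiagonal n, q ^ (p.1 + 1) * qbinom q n (p.1 + 1) * f (p.1 + 1) p.2 := by
    have h := Nat.sum_antidiagonal_succ' (n := n)
      (f := fun p => qbinom q n p.1 * (q ^ p.1 * f p.1 p.2))
    rw [Nat.sum_antidiagonal_succ, qbinom_of_lt q (Nat.lt_succ_self n)] at h
    simp only [qbinom_zero_right, pow_zero, one_mul, zero_mul, zero_add] at h
    rw [← h]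
    congr 1
    exact sum_congr rfl fun p _ => by ring
  calc ∑ p ∈ antidiagonal (n + 1), qbinom q (n + 1) p.1 * f p.1 p.2
      = f 0 (n + 1) + ∑ p ∈ antidiagonal n, (qbinom q n p.1 * f (p.1 + 1) p.2
          + q ^ (p.1 + 1) * qbinom q n (p.1 + 1) * f (p.1 + 1) p.2) := by
        simp only [Nat.sum_antidiagonal_succ, qbinom_zero_right, one_mul, qbinom_succ_succ,
          add_mul, mul_assoc]
    _ = ∑ p ∈ antidiagonal n, qbinom q n p.1 * f (p.1 + 1) p.2
          + ∑ p ∈ antidiagonal n, qbinom q n p.1 * (q ^ p.1 * f p.1 (p.2 + 1)) := by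
        rw [sum_add_distrib, shifted]; ring
    _ = _ := by simp only [mul_add, sum_add_distrib]

lemma sum_antidiagonal_succ_qbinom_mul_qint_fst (q : ℝ) (n : ℕ) (f : ℕ → ℕ → ℝ) :
    ∑ p ∈ antidiagonal (n + 1), qbinom q (n + 1) p.1 * qint q p.1 * f (p.1 - 1) p.2
      = qint q (n + 1) * ∑ p ∈ antidiagonal n, qbinom q n p.1 * f p.1 p.2 := by
  rw [Nat.sum_antidiagonal_succ, qint_zero, mul_zero, zero_mul, zero_add, mul_sum]
  refine sum_congr rfl fun p _ => ?_
  rw [qbinom_succ_succ_mul_qint, Nat.add_sub_cancel, mul_assoc]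

lemma sum_antidiagonal_succ_qbinom_mul_qint_snd (q : ℝ) (n : ℕ) (f : ℕ → ℕ → ℝ) :
    ∑ p ∈ antidiagonal (n + 1), qbinom q (n + 1) p.1 * qint q p.2 * f p.1 (p.2 - 1)
      = qint q (n + 1) * ∑ p ∈ antidiagonal n, qbinom q n p.1 * f p.1 p.2 := by
  rw [Nat.sum_antidiagonal_succ', qint_zero, mul_zero, zero_mul, zero_add, mul_sum]
  refine sum_congr rfl fun p hp => ?_
  have hj : p.2 + 1 = n + 1 - p.1 := by rw [← mem_antidiagonal.mp hp]; omega
  rw [hj, qbinom_succ_mul_qint_sub, ← hj, Nat.add_sub_cancel, mul_assoc]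

/-- The right-hand side of the composition formula, indexed by `i + j = n` to avoid truncated
subtraction. -/
noncomputable def ascConvolution (q x y z ρ₁ ρ₂ : ℝ) (n : ℕ) : ℝ :=
  ∑ p ∈ antidiagonal n, qbinom q n p.1 * (ρ₁ ^ p.2 * ASC q x z ρ₁ p.1 * ASC q z y ρ₂ p.2)

section Convolution

variable (q x y z ρ₁ ρ₂ : ℝ)

lemma ascConvolution_zero : ascConvolution q x y z ρ₁ ρ₂ 0 = 1 := by
  simp [ascConvolution, ASC]

lemma ascConvolution_one : ascConvolution q x y z ρ₁ ρ₂ 1 = x - ρ₁ * ρ₂ * y := by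
  simp [ascConvolution, Nat.sum_antidiagonal_succ, ASC, qbinom_succ_succ, qbinom_of_lt]
  ring

/-- At `j = 0` the truncated `j - 1` is harmless, being multiplied by `qint q 0 = 0`. -/
lemma ASC_succ_mul_add_mul_ASC_succ (i j : ℕ) :
    ρ₁ ^ j * ASC q x z ρ₁ (i + 1) * ASC q z y ρ₂ j
        + q ^ i * (ρ₁ ^ (j + 1) * ASC q x z ρ₁ i * ASC q z y ρ₂ (j + 1))
      = (x - ρ₁ * ρ₂ * y * q ^ (i + j)) * (ρ₁ ^ j * ASC q x z ρ₁ i * ASC q z y ρ₂ j)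
        - qint q i * (ρ₁ ^ j * (1 - ρ₁ ^ 2 * q ^ (i - 1)) * ASC q x z ρ₁ (i - 1)
            * ASC q z y ρ₂ j)
        - qint q j * (q ^ i * ρ₁ ^ (j - 1 + 2) * (1 - ρ₂ ^ 2 * q ^ (j - 1))
            * ASC q x z ρ₁ i * ASC q z y ρ₂ (j - 1)) := by
  rw [ASC_succ q x z ρ₁ i, ASC_succ q z y ρ₂ j]
  cases j with
  | zero => simp only [qint_zero]; ring
  | succ j => simp only [Nat.add_sub_cancel]; ring

lemma ascConvolution_succ_succ (n : ℕ) :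
    ascConvolution q x y z ρ₁ ρ₂ (n + 2)
      = (x - ρ₁ * ρ₂ * y * q ^ (n + 1)) * ascConvolution q x y z ρ₁ ρ₂ (n + 1)
        - qint q (n + 1) * (1 - (ρ₁ * ρ₂) ^ 2 * q ^ n) * ascConvolution q x y z ρ₁ ρ₂ n := by
  set a := ASC q x z ρ₁
  set b := ASC q z y ρ₂
  have lowered : ∀ p ∈ antidiagonal n,
      qbinom q n p.1 * (ρ₁ ^ p.2 * (1 - ρ₁ ^ 2 * q ^ p.1) * a p.1 * b p.2)
        + qbinom q n p.1 * (q ^ p.1 * ρ₁ ^ (p.2 + 2) * (1 - ρ₂ ^ 2 * q ^ p.2) * a p.1 * b p.2)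
      = (1 - (ρ₁ * ρ₂) ^ 2 * q ^ n) * (qbinom q n p.1 * (ρ₁ ^ p.2 * a p.1 * b p.2)) := by
    intro p hp
    rw [← mem_antidiagonal.mp hp, pow_add]
    ring
  calc ascConvolution q x y z ρ₁ ρ₂ (n + 2)
      = ∑ p ∈ antidiagonal (n + 1), qbinom q (n + 1) p.1 *
          ((x - ρ₁ * ρ₂ * y * q ^ (n + 1)) * (ρ₁ ^ p.2 * a p.1 * b p.2)
            - qint q p.1 * (ρ₁ ^ p.2 * (1 - ρ₁ ^ 2 * q ^ (p.1 - 1)) * a (p.1 - 1) * b p.2)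
            - qint q p.2 * (q ^ p.1 * ρ₁ ^ (p.2 - 1 + 2) * (1 - ρ₂ ^ 2 * q ^ (p.2 - 1))
                * a p.1 * b (p.2 - 1))) := by
        rw [ascConvolution,
          sum_antidiagonal_succ_qbinom_mul q (n + 1) fun i j => ρ₁ ^ j * a i * b j]
        refine sum_congr rfl fun p hp => ?_
        rw [← mem_antidiagonal.mp hp, ← ASC_succ_mul_add_mul_ASC_succ]
    _ = (x - ρ₁ * ρ₂ * y * q ^ (n + 1)) * ascConvolution q x y z ρ₁ ρ₂ (n + 1)
          - qint q (n + 1) * ∑ p ∈ antidiagonal n,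
              qbinom q n p.1 * (ρ₁ ^ p.2 * (1 - ρ₁ ^ 2 * q ^ p.1) * a p.1 * b p.2)
          - qint q (n + 1) * ∑ p ∈ antidiagonal n, qbinom q n p.1
              * (q ^ p.1 * ρ₁ ^ (p.2 + 2) * (1 - ρ₂ ^ 2 * q ^ p.2) * a p.1 * b p.2) := by
        rw [← sum_antidiagonal_succ_qbinom_mul_qint_fst q n
            (fun i j => ρ₁ ^ j * (1 - ρ₁ ^ 2 * q ^ i) * a i * b j),
          ← sum_antidiagonal_succ_qbinom_mul_qint_snd q n
            (fun i j => q ^ i * ρ₁ ^ (j + 2) * (1 - ρ₂ ^ 2 * q ^ j) * a i * b j),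
          ascConvolution, mul_sum, ← sum_sub_distrib, ← sum_sub_distrib]
        exact sum_congr rfl fun p _ => by ring
    _ = _ := by
        rw [sub_sub, ← mul_add, ← sum_add_distrib, sum_congr rfl lowered, ← mul_sum,
          mul_assoc (qint q (n + 1))]
        rfl

end Convolution

theorem ASC_composition (q x y z ρ₁ ρ₂ : ℝ) (n : ℕ) :
    ASC q x y (ρ₁ * ρ₂) n =
      ∑ i ∈ Finset.range (n + 1),
        qbinom q n i * ρ₁ ^ (n - i) * ASC q x z ρ₁ i * ASC q z y ρ₂ (n - i) := by
  rw [← eq_ASC_of_recurrence (ascConvolution_zero q x y z ρ₁ ρ₂)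
      (ascConvolution_one q x y z ρ₁ ρ₂) (ascConvolution_succ_succ q x y z ρ₁ ρ₂) n,
    ascConvolution, Nat.sum_antidiagonal_eq_sum_range_succ
      (fun i j => qbinom q n i * (ρ₁ ^ j * ASC q x z ρ₁ i * ASC q z y ρ₂ j))]
  exact sum_congr rfl fun i _ => by ring
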